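/- arXiv:1810.02554 — 7 statements merged into one kernel-verified Lean document; each statement's English description precedes it below -/
import Mathlib

section
/- For all integers h, m, n, u, v, w, the relation [z_3^h z_2^m z_1^n, z_3^u z_2^v z_1^w] = (q^{mu + nv − nu} − q^{hv − hw + mw}) z_3^{h+u} z_2^{m+v} z_1^{n+w} holds in A_q. -/
/-!
In the unit group of `A`, the scalar `q` becomes a central unit `c` and the defining relations
read `z_i z_j = c z_j z_i`. In a group, `a b = c b a` with `c` central gives
`a^i b^j = c^(ij) b^j a^i` (conjugation by `a` is a homomorphism, then swap the roles of `a`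
and `b^j`). Moving `z_1^n` past `z_3^u`, `z_2^m` past `z_3^u` and `z_1^n` past `z_2^v` turns a
product of two ordered monomials into `q^(mu + nv - nu)` times an ordered monomial; the
commutator is the difference of the two products taken in either order.
-/

section CentralCommutator

variable {G : Type*} [Group G] {a b c : G}

theorem mul_eq_inv_mul_of_mul_eq_mul (hab : a * b = c * (b * a)) : b * a = c⁻¹ * (a * b) := by
  rw [hab, inv_mul_cancel_left]

theorem mul_zpow_eq_of_mul_eq_mul (hc : ∀ g, Commute c g) (hab : a * b = c * (b * a)) (j : ℤ) :
    a * b ^ j = c ^ j * (b ^ j * a) := by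
  have hsemi : SemiconjBy a b (c * b) := by rw [SemiconjBy, hab, mul_assoc]
  rw [hsemi.zpow_right j, (hc b).mul_zpow, mul_assoc]

theorem zpow_mul_zpow_eq_of_mul_eq_mul (hc : ∀ g, Commute c g) (hab : a * b = c * (b * a))
    (i j : ℤ) : a ^ i * b ^ j = c ^ (i * j) * (b ^ j * a ^ i) := by
  have hflip := mul_eq_inv_mul_of_mul_eq_mul (mul_zpow_eq_of_mul_eq_mul hc hab j)
  have := mul_zpow_eq_of_mul_eq_mul (fun g => ((hc g).zpow_left j).inv_left) hflip i
  rw [mul_eq_inv_mul_of_mul_eq_mul this, ← inv_zpow, inv_inv, ← zpow_mul, mul_comm j i]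

end CentralCommutator

section QuantumTorus

variable {F : Type*} [Field F] {A : Type*} [Ring A] [Algebra F A] {q : F}

theorem Units.val_zpow_map_algebraMap_mk0 (hq : q ≠ 0) (k : ℤ) :
    ((Units.map (algebraMap F A : F →* A) (Units.mk0 q hq) ^ k : Aˣ) : A) =
      algebraMap F A (q ^ k) := by
  rw [← map_zpow, Units.coe_map, Units.val_zpow_eq_zpow_val, Units.val_mk0]
  rfl

theorem Units.commute_map_algebraMap (u : Fˣ) (g : Aˣ) :
    Commute (Units.map (algebraMap F A : F →* A) u) g :=
  Units.ext (Algebra.commutes _ _)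

theorem Units.zpow_mul_zpow_of_mul_eq_smul (hq : q ≠ 0) {a b : Aˣ}
    (hab : (a * b : A) = q • (b * a : A)) (i j : ℤ) :
    ((a ^ i : Aˣ) * (b ^ j : Aˣ) : A) = q ^ (i * j) • ((b ^ j : Aˣ) * (a ^ i : Aˣ) : A) := by
  set c := Units.map (algebraMap F A : F →* A) (Units.mk0 q hq)
  have hab' : a * b = c * (b * a) := by
    ext
    simpa [c, Algebra.smul_def] using hab
  have := congrArg Units.val
    (zpow_mul_zpow_eq_of_mul_eq_mul (Units.commute_map_algebraMap _) hab' i j)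
  rwa [Units.val_mul, Units.val_mul, Units.val_zpow_map_algebraMap_mk0, ← Algebra.smul_def,
    Units.val_mul] at this

theorem monomial_mul_monomial_of_mul_eq_smul (hq : q ≠ 0) {z1 z2 z3 : Aˣ}
    (h12 : (z1 * z2 : A) = q • (z2 * z1 : A)) (h23 : (z2 * z3 : A) = q • (z3 * z2 : A))
    (h31 : (z3 * z1 : A) = q • (z1 * z3 : A)) (h m n u v w : ℤ) :
    ((z3 ^ h * z2 ^ m * z1 ^ n : Aˣ) * (z3 ^ u * z2 ^ v * z1 ^ w : Aˣ) : A) =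
      q ^ (m * u + n * v - n * u) • ((z3 ^ (h + u) * z2 ^ (m + v) * z1 ^ (n + w) : Aˣ) : A) := by
  have e13 : ((z1 ^ n : Aˣ) * (z3 ^ u : Aˣ) : A) =
      q ^ (-(n * u)) • ((z3 ^ u : Aˣ) * (z1 ^ n : Aˣ) : A) := by
    rw [Units.zpow_mul_zpow_of_mul_eq_smul hq h31 u n, smul_smul, ← zpow_add₀ hq, mul_comm u n,
      neg_add_cancel, zpow_zero, one_smul]
  have e23 := Units.zpow_mul_zpow_of_mul_eq_smul hq h23 m u
  have e12 := Units.zpow_mul_zpow_of_mul_eq_smul hq h12 n v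
  calc ((z3 ^ h * z2 ^ m * z1 ^ n : Aˣ) * (z3 ^ u * z2 ^ v * z1 ^ w : Aˣ) : A)
      = (z3 ^ h : Aˣ) * ((z2 ^ m : Aˣ) * ((z1 ^ n : Aˣ) * (z3 ^ u : Aˣ)) * (z2 ^ v : Aˣ)) *
          (z1 ^ w : Aˣ) := by
        simp only [Units.val_mul, mul_assoc]
    _ = q ^ (-(n * u)) • ((z3 ^ h : Aˣ) * ((z2 ^ m : Aˣ) * (z3 ^ u : Aˣ)) *
          ((z1 ^ n : Aˣ) * (z2 ^ v : Aˣ)) * (z1 ^ w : Aˣ) : A) := by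
        rw [e13]
        simp only [smul_mul_assoc, mul_smul_comm, mul_assoc]
    _ = q ^ (m * u + n * v - n * u) •
          ((z3 ^ (h + u) * z2 ^ (m + v) * z1 ^ (n + w) : Aˣ) : A) := by
        rw [e23, e12]
        simp only [smul_mul_assoc, mul_smul_comm, smul_smul, ← zpow_add₀ hq, zpow_add,
          Units.val_mul, mul_assoc]
        congr 2
        ring

end QuantumTorus

theorem monomial_commutator_formula_general
    {F : Type*} [Field F] {A : Type*} [Ring A] [Algebra F A]
    (q : F) (hq : q ≠ 0)
    (z1 z2 z3 : Aˣ)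
    (h12 : (↑z1 * ↑z2 : A) = q • (↑z2 * ↑z1 : A))
    (h23 : (↑z2 * ↑z3 : A) = q • (↑z3 * ↑z2 : A))
    (h31 : (↑z3 * ↑z1 : A) = q • (↑z1 * ↑z3 : A))
    (h m n u v w : ℤ) :
    (↑(z3 ^ h * z2 ^ m * z1 ^ n) : A) * (↑(z3 ^ u * z2 ^ v * z1 ^ w) : A) -
        (↑(z3 ^ u * z2 ^ v * z1 ^ w) : A) * (↑(z3 ^ h * z2 ^ m * z1 ^ n) : A) =
      (q ^ (m * u + n * v - n * u) - q ^ (h * v - h * w + m * w)) •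
        (↑(z3 ^ (h + u) * z2 ^ (m + v) * z1 ^ (n + w)) : A) := by
  rw [monomial_mul_monomial_of_mul_eq_smul hq h12 h23 h31 h m n u v w,
    monomial_mul_monomial_of_mul_eq_smul hq h12 h23 h31 u v w h m n,
    add_comm u h, add_comm v m, add_comm w n, ← sub_smul]
  congr 3
  ring

/-- For all integers `h, m, n, u, v, w`, the relation
`[z₃^h z₂^m z₁^n, z₃^u z₂^v z₁^w] = (q^{mu+nv-nu} - q^{hv-hw+mw}) z₃^{h+u} z₂^{m+v} z₁^{n+w}`
holds in `A_q`, where `[U,V] = UV - VU`. -/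
theorem monomial_commutator_formula
    {F : Type*} [Field F] {A : Type*} [Ring A] [Algebra F A]
    (q : F) (hq : q ≠ 0)
    (z1 z2 z3 : Aˣ)
    (h12 : (↑z1 * ↑z2 : A) = q • (↑z2 * ↑z1 : A))
    (h23 : (↑z2 * ↑z3 : A) = q • (↑z3 * ↑z2 : A))
    (h31 : (↑z3 * ↑z1 : A) = q • (↑z1 * ↑z3 : A))
    (b : Module.Basis (ℤ × ℤ × ℤ) F A)
    (hb : ∀ t : ℤ × ℤ × ℤ, b t = (↑(z3 ^ t.1 * z2 ^ t.2.1 * z1 ^ t.2.2) : A))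
    (h m n u v w : ℤ) :
    (↑(z3 ^ h * z2 ^ m * z1 ^ n) : A) * (↑(z3 ^ u * z2 ^ v * z1 ^ w) : A) -
        (↑(z3 ^ u * z2 ^ v * z1 ^ w) : A) * (↑(z3 ^ h * z2 ^ m * z1 ^ n) : A) =
      (q ^ (m * u + n * v - n * u) - q ^ (h * v - h * w + m * w)) •
        (↑(z3 ^ (h + u) * z2 ^ (m + v) * z1 ^ (n + w)) : A) :=
  monomial_commutator_formula_general q hq z1 z2 z3 h12 h23 h31 h m n u v w
end

section
/- For all integers h, m, n, u, v, w, the relation [z_3^h z_2^m z_1^n, z_3^u z_2^v z_1^w] = (1 − q^H) · z_3^h z_2^m z_1^n · z_3^u z_2^v z_1^w holds in A_q, where H = h(v − w) + m(w − u) + n(u − v). -/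
/-!
The relation `ScalarCommute c x y : x * y = c • (y * x)` is multiplicative in each argument (the
scalars multiply), and between units it passes to integer powers: `x ^ a` and `y ^ b` commute up
to `c ^ (a * b)`. Pushing each of the three factors of the second monomial `Y` past each of the
three factors of the first monomial `X` thus gives `Y * X = q ^ H • (X * Y)`, where `q ^ H` is the
product of the nine scalars, and the commutator is `X * Y - q ^ H • (X * Y)`.
-/

def ScalarCommute {R A : Type*} [SMul R A] [Mul A] (c : R) (x y : A) : Prop :=
  x * y = c • (y * x)

namespace ScalarCommute

section Semiring

variable {R A : Type*} [CommSemiring R] [Semiring A] [Algebra R A] {c d : R} {x y z : A}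

theorem refl (x : A) : ScalarCommute (1 : R) x x := (one_smul R _).symm

theorem mul_right (hy : ScalarCommute c x y) (hz : ScalarCommute d x z) :
    ScalarCommute (c * d) x (y * z) := by
  unfold ScalarCommute at *
  rw [← mul_assoc, hy, smul_mul_assoc, mul_assoc, hz, mul_smul_comm, smul_smul, mul_assoc]

theorem mul_left (hx : ScalarCommute c x z) (hy : ScalarCommute d y z) :
    ScalarCommute (c * d) (x * y) z := by
  unfold ScalarCommute at *
  rw [mul_assoc, hy, mul_smul_comm, ← mul_assoc, hx, smul_mul_assoc, smul_smul, mul_comm c,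
    mul_assoc]

theorem pow_right (h : ScalarCommute c x y) (n : ℕ) : ScalarCommute (c ^ n) x (y ^ n) := by
  induction n with
  | zero => simp [ScalarCommute]
  | succ n ih => simpa only [pow_succ] using ih.mul_right h

end Semiring

section Field

variable {F A : Type*} [Field F] [Semiring A] [Algebra F A] {c : F} {x y : A}

theorem symm (hc : c ≠ 0) (h : ScalarCommute c x y) : ScalarCommute c⁻¹ y x := by
  unfold ScalarCommute at *
  rw [h, smul_smul, inv_mul_cancel₀ hc, one_smul]

theorem units_inv_right (hc : c ≠ 0) {y : Aˣ} (h : ScalarCommute c x ↑y) :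
    ScalarCommute c⁻¹ x ↑y⁻¹ := by
  refine symm hc ?_
  calc (↑y⁻¹ * x : A) = ↑y⁻¹ * (x * ↑y) * ↑y⁻¹ := by
        rw [mul_assoc, mul_assoc, Units.mul_inv, mul_one]
    _ = c • (x * ↑y⁻¹) := by
        rw [h, mul_smul_comm, smul_mul_assoc, ← mul_assoc, Units.inv_mul, one_mul]

theorem units_zpow_right (hc : c ≠ 0) {y : Aˣ} (h : ScalarCommute c x ↑y) (n : ℤ) :
    ScalarCommute (c ^ n) x ↑(y ^ n) := by
  cases n with
  | ofNat n => simpa only [Int.ofNat_eq_natCast, zpow_natCast, Units.val_pow_eq_pow_val]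
      using h.pow_right n
  | negSucc n =>
    rw [zpow_negSucc, zpow_negSucc]
    have := h.pow_right (n + 1)
    rw [← Units.val_pow_eq_pow_val] at this
    exact units_inv_right (pow_ne_zero _ hc) this

theorem units_zpow_zpow (hc : c ≠ 0) {x y : Aˣ} (h : ScalarCommute c (x : A) y) (a b : ℤ) :
    ScalarCommute (c ^ (a * b)) (↑(x ^ a) : A) ↑(y ^ b) := by
  have hx : ScalarCommute (c⁻¹ ^ a) (y : A) ↑(x ^ a) :=
    (h.symm hc).units_zpow_right (inv_ne_zero hc) a
  have hxy := (hx.symm (zpow_ne_zero a (inv_ne_zero hc))).units_zpow_right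
    (inv_ne_zero (zpow_ne_zero a (inv_ne_zero hc))) b
  simpa only [inv_zpow, inv_inv, ← zpow_mul] using hxy

theorem sub_eq_smul {A : Type*} [Ring A] [Algebra F A] {x y : A} (h : ScalarCommute c y x) :
    x * y - y * x = (1 - c) • (x * y) := by
  rw [h, sub_smul, one_smul]

end Field

end ScalarCommute

theorem monomial_commutator_vs_product_general
    {F : Type*} [Field F] {A : Type*} [Ring A] [Algebra F A]
    (q : F) (hq : q ≠ 0)
    (z1 z2 z3 : Aˣ)
    (h12 : (↑z1 * ↑z2 : A) = q • (↑z2 * ↑z1 : A))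
    (h23 : (↑z2 * ↑z3 : A) = q • (↑z3 * ↑z2 : A))
    (h31 : (↑z3 * ↑z1 : A) = q • (↑z1 * ↑z3 : A))
    (h m n u v w : ℤ) :
    (↑(z3 ^ h * z2 ^ m * z1 ^ n) : A) * (↑(z3 ^ u * z2 ^ v * z1 ^ w) : A) -
        (↑(z3 ^ u * z2 ^ v * z1 ^ w) : A) * (↑(z3 ^ h * z2 ^ m * z1 ^ n) : A) =
      (1 - q ^ (h * (v - w) + m * (w - u) + n * (u - v))) •
        ((↑(z3 ^ h * z2 ^ m * z1 ^ n) : A) * (↑(z3 ^ u * z2 ^ v * z1 ^ w) : A)) := by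
  have h12 : ScalarCommute q (z1 : A) z2 := h12
  have h23 : ScalarCommute q (z2 : A) z3 := h23
  have h31 : ScalarCommute q (z3 : A) z1 := h31
  have hqi : q⁻¹ ≠ 0 := inv_ne_zero hq
  have h1 : (1 : F) ≠ 0 := one_ne_zero
  have h11 := (ScalarCommute.refl (z1 : A)).units_zpow_zpow h1
  have h22 := (ScalarCommute.refl (z2 : A)).units_zpow_zpow h1
  have h33 := (ScalarCommute.refl (z3 : A)).units_zpow_zpow h1
  have h21 := (h12.symm hq).units_zpow_zpow hqi
  have h32 := (h23.symm hq).units_zpow_zpow hqi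
  have h13 := (h31.symm hq).units_zpow_zpow hqi
  have hz3X := ((h33 u h).mul_right (h32 u m)).mul_right (h31.units_zpow_zpow hq u n)
  have hz2X := ((h23.units_zpow_zpow hq v h).mul_right (h22 v m)).mul_right (h21 v n)
  have hz1X := ((h13 w h).mul_right (h12.units_zpow_zpow hq w m)).mul_right (h11 w n)
  have hYX : ScalarCommute (q ^ (h * (v - w) + m * (w - u) + n * (u - v)))
      (↑(z3 ^ u * z2 ^ v * z1 ^ w) : A) ↑(z3 ^ h * z2 ^ m * z1 ^ n) := by
    simp only [Units.val_mul]
    convert (hz3X.mul_left hz2X).mul_left hz1X using 1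
    simp only [one_zpow, one_mul, mul_one, inv_zpow', ← zpow_add₀ hq]
    congr 1
    ring
  exact hYX.sub_eq_smul

/-- For all integers `h, m, n, u, v, w`, the relation
`[z₃^h z₂^m z₁^n, z₃^u z₂^v z₁^w] = (1 - q^H) · z₃^h z₂^m z₁^n · z₃^u z₂^v z₁^w`
holds in `A_q`, where `H = h(v-w) + m(w-u) + n(u-v)` and `[U,V] = UV - VU`. -/
theorem monomial_commutator_vs_product
    {F : Type*} [Field F] {A : Type*} [Ring A] [Algebra F A]
    (q : F) (hq : q ≠ 0)
    (z1 z2 z3 : Aˣ)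
    (h12 : (↑z1 * ↑z2 : A) = q • (↑z2 * ↑z1 : A))
    (h23 : (↑z2 * ↑z3 : A) = q • (↑z3 * ↑z2 : A))
    (h31 : (↑z3 * ↑z1 : A) = q • (↑z1 * ↑z3 : A))
    (b : Module.Basis (ℤ × ℤ × ℤ) F A)
    (hb : ∀ t : ℤ × ℤ × ℤ, b t = (↑(z3 ^ t.1 * z2 ^ t.2.1 * z1 ^ t.2.2) : A))
    (h m n u v w : ℤ) :
    (↑(z3 ^ h * z2 ^ m * z1 ^ n) : A) * (↑(z3 ^ u * z2 ^ v * z1 ^ w) : A) -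
        (↑(z3 ^ u * z2 ^ v * z1 ^ w) : A) * (↑(z3 ^ h * z2 ^ m * z1 ^ n) : A) =
      (1 - q ^ (h * (v - w) + m * (w - u) + n * (u - v))) •
        ((↑(z3 ^ h * z2 ^ m * z1 ^ n) : A) * (↑(z3 ^ u * z2 ^ v * z1 ^ w) : A)) :=
  monomial_commutator_vs_product_general q hq z1 z2 z3 h12 h23 h31 h m n u v w
end

section
/- For every natural number T, the identities (ad z_1)^T([[z_3⁻¹, z_2⁻¹], z_2⁻¹]) = q^{−T} (1 − q)^{T+2} z_3⁻¹ z_2⁻² z_1^T and (ad z_1⁻¹)^T([[z_3⁻¹, z_2⁻¹], z_2⁻¹]) = (−1)^T (1 − q)^{T+2} z_3⁻¹ z_2⁻² z_1^{−T} hold in A_q. -/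
/-!
Writing `v = z₃⁻¹ z₂⁻²`, the relations give `[[z₃⁻¹, z₂⁻¹], z₂⁻¹] = (1 - q)² v`, and `z₁ v = q⁻¹ v z₁`,
`z₁⁻¹ v = q v z₁⁻¹`. Whenever `u v = c v u`, the adjoint action of `u` multiplies `v uⁿ` by `c - 1` and
raises the power of `u` by one, so `(ad u)^T v = (c - 1)^T v u^T`; with `c = q⁻¹` and `c = q` this gives the
two identities.
-/

/-- The commutator `[U,V] = UV - VU`. -/
def br {A : Type*} [Ring A] (U V : A) : A := U * V - V * U

/-- The adjoint map `ad U : V ↦ [U,V] = UV - VU`. -/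
def adMap {A : Type*} [Ring A] (U : A) : A → A := fun V => U * V - V * U

def QCommute {R A : Type*} [Mul A] [SMul R A] (c : R) (x y : A) : Prop :=
  x * y = c • (y * x)

namespace QCommute

section Semiring

variable {R A : Type*} [CommSemiring R] [Semiring A] [Algebra R A] {a b c : R} {x y z : A}

theorem refl (x : A) : QCommute (1 : R) x x := by
  rw [QCommute, one_smul]

theorem congr_scalar (h : QCommute a x y) (hab : a = b) : QCommute b x y := hab ▸ h

theorem mul_right (hy : QCommute a x y) (hz : QCommute b x z) : QCommute (a * b) x (y * z) := by
  unfold QCommute at *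
  rw [← mul_assoc, hy, smul_mul_assoc, mul_assoc, hz, mul_smul_comm, smul_smul, mul_assoc]

theorem smul_right (h : QCommute c x y) (a : R) : QCommute c x (a • y) := by
  unfold QCommute at *
  rw [mul_smul_comm, h, smul_mul_assoc, smul_comm]

theorem swap_units_inv {u : Aˣ} (h : QCommute c (u : A) x) : QCommute c x (↑u⁻¹ : A) := by
  unfold QCommute at *
  calc x * ↑u⁻¹ = ↑u⁻¹ * (↑u * x) * ↑u⁻¹ := by simp
    _ = c • (↑u⁻¹ * x) := by rw [h, mul_smul_comm, smul_mul_assoc]; simp [mul_assoc]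

end Semiring

theorem symm {K A : Type*} [Semifield K] [Semiring A] [Algebra K A] {c : K} {x y : A}
    (h : QCommute c x y) (hc : c ≠ 0) : QCommute c⁻¹ y x := by
  unfold QCommute at *
  rw [h, smul_smul, inv_mul_cancel₀ hc, one_smul]

section Ring

variable {R A : Type*} [CommRing R] [Ring A] [Algebra R A] {c : R} {x y u v : A}

theorem br_eq (h : QCommute c y x) : br x y = (1 - c) • (x * y) := by
  unfold QCommute at h
  rw [br, h, sub_smul, one_smul]

theorem adMap_mul_pow (h : QCommute c u v) (n : ℕ) :
    adMap u (v * u ^ n) = (c - 1) • (v * u ^ (n + 1)) := by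
  unfold QCommute at h
  rw [adMap, ← mul_assoc, h, smul_mul_assoc, mul_assoc, ← pow_succ', mul_assoc, ← pow_succ,
    sub_smul, one_smul]

theorem adMap_iterate (h : QCommute c u v) (n : ℕ) :
    (adMap u)^[n] v = (c - 1) ^ n • (v * u ^ n) := by
  induction n with
  | zero => simp
  | succ n ih =>
    have hlin : adMap u ((c - 1) ^ n • (v * u ^ n)) = (c - 1) ^ n • adMap u (v * u ^ n) := by
      simp only [adMap, mul_smul_comm, smul_mul_assoc, smul_sub]
    rw [Function.iterate_succ_apply', ih, hlin, h.adMap_mul_pow, smul_smul, ← pow_succ]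

end Ring

end QCommute

theorem ad_iterate_identities_general
    {F : Type*} [Field F] {A : Type*} [Ring A] [Algebra F A]
    (q : F) (hq : q ≠ 0)
    (z1 z2 z3 : Aˣ)
    (h12 : (↑z1 * ↑z2 : A) = q • (↑z2 * ↑z1 : A))
    (h23 : (↑z2 * ↑z3 : A) = q • (↑z3 * ↑z2 : A))
    (h31 : (↑z3 * ↑z1 : A) = q • (↑z1 * ↑z3 : A))
    (T : ℕ) :
    (adMap (↑z1 : A))^[T] (br (br (↑z3⁻¹ : A) (↑z2⁻¹ : A)) (↑z2⁻¹ : A)) =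
      (q ^ (-(T : ℤ)) * (1 - q) ^ (T + 2)) •
        (↑(z3⁻¹ * z2 ^ (-2 : ℤ) * z1 ^ (T : ℤ)) : A) ∧
    (adMap (↑z1⁻¹ : A))^[T] (br (br (↑z3⁻¹ : A) (↑z2⁻¹ : A)) (↑z2⁻¹ : A)) =
      ((-1 : F) ^ T * (1 - q) ^ (T + 2)) •
        (↑(z3⁻¹ * z2 ^ (-2 : ℤ) * z1 ^ (-(T : ℤ))) : A) := by
  have h2i3i : QCommute q (↑z2⁻¹ : A) ↑z3⁻¹ :=
    (QCommute.swap_units_inv h23).swap_units_inv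
  have h13i : QCommute q (z1 : A) ↑z3⁻¹ := QCommute.swap_units_inv h31
  have h12i : QCommute q⁻¹ (z1 : A) ↑z2⁻¹ := (QCommute.symm h12 hq).swap_units_inv
  set v : A := ↑(z3⁻¹ * z2 ^ (-2 : ℤ)) with hv
  have hv_expand : v = ↑z3⁻¹ * ↑z2⁻¹ * ↑z2⁻¹ := by simp [hv, zpow_neg, sq, mul_assoc]
  have h1v : QCommute q⁻¹ (z1 : A) v :=
    hv_expand ▸ ((h13i.mul_right h12i).mul_right h12i).congr_scalar (by field_simp)
  have h1iv : QCommute q (↑z1⁻¹ : A) v := by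
    simpa only [inv_inv] using h1v.swap_units_inv.symm (inv_ne_zero hq)
  have h2i_3i2i : QCommute q (↑z2⁻¹ : A) ((1 - q) • (↑z3⁻¹ * ↑z2⁻¹)) :=
    ((h2i3i.mul_right (.refl _)).congr_scalar (mul_one q)).smul_right _
  have hbase : br (br (↑z3⁻¹ : A) ↑z2⁻¹) ↑z2⁻¹ = (1 - q) ^ 2 • v := by
    rw [h2i3i.br_eq, h2i_3i2i.br_eq, hv_expand, smul_mul_assoc, smul_smul, sq]
  refine ⟨?_, ?_⟩
  · rw [hbase, (h1v.smul_right _).adMap_iterate T, Units.val_mul, ← hv, zpow_natCast,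
      Units.val_pow_eq_pow_val, smul_mul_assoc, smul_smul, zpow_neg, zpow_natCast]
    congr 1
    rw [show q⁻¹ - 1 = q⁻¹ * (1 - q) by field_simp, mul_pow, inv_pow]
    ring
  · rw [hbase, (h1iv.smul_right _).adMap_iterate T, Units.val_mul, ← hv, zpow_neg, zpow_natCast,
      ← inv_pow, Units.val_pow_eq_pow_val, smul_mul_assoc, smul_smul]
    congr 1
    rw [show q - 1 = -1 * (1 - q) by ring, mul_pow]
    ring

/-- For every natural number `T`, the identities
`(ad z₁)^T ([[z₃⁻¹, z₂⁻¹], z₂⁻¹]) = q^{-T} (1-q)^{T+2} z₃⁻¹ z₂⁻² z₁^T` and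
`(ad z₁⁻¹)^T ([[z₃⁻¹, z₂⁻¹], z₂⁻¹]) = (-1)^T (1-q)^{T+2} z₃⁻¹ z₂⁻² z₁^{-T}`
hold in `A_q`. -/
theorem ad_iterate_identities
    {F : Type*} [Field F] {A : Type*} [Ring A] [Algebra F A]
    (q : F) (hq : q ≠ 0)
    (z1 z2 z3 : Aˣ)
    (h12 : (↑z1 * ↑z2 : A) = q • (↑z2 * ↑z1 : A))
    (h23 : (↑z2 * ↑z3 : A) = q • (↑z3 * ↑z2 : A))
    (h31 : (↑z3 * ↑z1 : A) = q • (↑z1 * ↑z3 : A))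
    (b : Module.Basis (ℤ × ℤ × ℤ) F A)
    (hb : ∀ t : ℤ × ℤ × ℤ, b t = (↑(z3 ^ t.1 * z2 ^ t.2.1 * z1 ^ t.2.2) : A))
    (T : ℕ) :
    (adMap (↑z1 : A))^[T] (br (br (↑z3⁻¹ : A) (↑z2⁻¹ : A)) (↑z2⁻¹ : A)) =
      (q ^ (-(T : ℤ)) * (1 - q) ^ (T + 2)) •
        (↑(z3⁻¹ * z2 ^ (-2 : ℤ) * z1 ^ (T : ℤ)) : A) ∧
    (adMap (↑z1⁻¹ : A))^[T] (br (br (↑z3⁻¹ : A) (↑z2⁻¹ : A)) (↑z2⁻¹ : A)) =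
      ((-1 : F) ^ T * (1 - q) ^ (T + 2)) •
        (↑(z3⁻¹ * z2 ^ (-2 : ℤ) * z1 ^ (-(T : ℤ))) : A) :=
  ad_iterate_identities_general q hq z1 z2 z3 h12 h23 h31 T
end

section
/- For every integer h, the identity [z_3 z_2² z_1, z_3⁻¹ z_2⁻² z_1^{h−1}] = q^{−3} (1 − q^h) z_1^h holds in A_q. -/
section SkewCommuting

variable {F A : Type*} [Field F] [Ring A] [Algebra F A] {c : F} {u v : Aˣ}

lemma Units.inv_mul_eq_inv_smul_of_mul_eq_smul (hc : c ≠ 0)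
    (huv : (↑u * ↑v : A) = c • (↑v * ↑u)) : (↑u⁻¹ * ↑v : A) = c⁻¹ • (↑v * ↑u⁻¹) := by
  have h : c • (↑u⁻¹ * ↑v : A) = ↑v * ↑u⁻¹ := by
    calc c • (↑u⁻¹ * ↑v : A) = ↑u⁻¹ * (c • (↑v * ↑u)) * ↑u⁻¹ := by
          simp only [mul_smul_comm, smul_mul_assoc, mul_assoc, Units.mul_inv, mul_one]
      _ = ↑v * ↑u⁻¹ := by rw [← huv]; simp [← mul_assoc]
  rw [← h, smul_smul, inv_mul_cancel₀ hc, one_smul]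

lemma Units.zpow_mul_eq_smul_of_mul_eq_smul (hc : c ≠ 0) (huv : (↑u * ↑v : A) = c • (↑v * ↑u))
    (m : ℤ) : (↑(u ^ m) * ↑v : A) = c ^ m • (↑v * ↑(u ^ m)) := by
  induction m using Int.induction_on with
  | zero => simp
  | succ k ih =>
    rw [zpow_add_one, Units.val_mul, mul_assoc, huv, mul_smul_comm, ← mul_assoc, ih,
      smul_mul_assoc, smul_smul, zpow_add_one₀ hc, mul_comm c, mul_assoc]
  | pred k ih =>
    rw [zpow_sub_one, Units.val_mul, mul_assoc, inv_mul_eq_inv_smul_of_mul_eq_smul hc huv,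
      mul_smul_comm, ← mul_assoc, ih, smul_mul_assoc, smul_smul, zpow_sub_one₀ hc, mul_comm c⁻¹,
      mul_assoc]

lemma Units.zpow_mul_zpow_eq_smul_of_mul_eq_smul (hc : c ≠ 0)
    (huv : (↑u * ↑v : A) = c • (↑v * ↑u)) (m n : ℤ) :
    (↑(u ^ m) * ↑(v ^ n) : A) = c ^ (m * n) • (↑(v ^ n) * ↑(u ^ m)) := by
  have hvu : (↑v * ↑(u ^ m) : A) = c ^ (-m) • (↑(u ^ m) * ↑v) := by
    rw [zpow_mul_eq_smul_of_mul_eq_smul hc huv, smul_smul, ← zpow_add₀ hc, neg_add_cancel,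
      zpow_zero, one_smul]
  rw [zpow_mul_eq_smul_of_mul_eq_smul (zpow_ne_zero _ hc) hvu, smul_smul, ← zpow_mul,
    ← zpow_add₀ hc, neg_mul, add_neg_cancel, zpow_zero, one_smul]

end SkewCommuting

section QuantumTorus

variable {F A : Type*} [Field F] [Ring A] [Algebra F A] {q : F} {z1 z2 z3 : Aˣ}

lemma quantumTorus_monomial_mul (hq : q ≠ 0)
    (h12 : (↑z1 * ↑z2 : A) = q • (↑z2 * ↑z1 : A))
    (h23 : (↑z2 * ↑z3 : A) = q • (↑z3 * ↑z2 : A))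
    (h31 : (↑z3 * ↑z1 : A) = q • (↑z1 * ↑z3 : A))
    (a b c d e f : ℤ) :
    (↑(z3 ^ a * z2 ^ b * z1 ^ c) * ↑(z3 ^ d * z2 ^ e * z1 ^ f) : A) =
      q ^ (b * d + c * e - c * d) • (↑(z3 ^ (a + d) * z2 ^ (b + e) * z1 ^ (c + f)) : A) := by
  have h13 : (↑(z1 ^ c) * ↑(z3 ^ d) : A) = q ^ (-(c * d)) • (↑(z3 ^ d) * ↑(z1 ^ c)) := by
    rw [Units.zpow_mul_zpow_eq_smul_of_mul_eq_smul hq h31, smul_smul, ← zpow_add₀ hq,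
      mul_comm d, neg_add_cancel, zpow_zero, one_smul]
  calc (↑(z3 ^ a * z2 ^ b * z1 ^ c) * ↑(z3 ^ d * z2 ^ e * z1 ^ f) : A)
      = ↑(z3 ^ a) * (↑(z2 ^ b) * ((↑(z1 ^ c) * ↑(z3 ^ d)) * (↑(z2 ^ e) * ↑(z1 ^ f)))) := by
        simp only [Units.val_mul, mul_assoc]
    _ = q ^ (-(c * d)) •
          (↑(z3 ^ a) * ((↑(z2 ^ b) * ↑(z3 ^ d)) * ((↑(z1 ^ c) * ↑(z2 ^ e)) * ↑(z1 ^ f)))) := by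
        rw [h13]
        simp only [smul_mul_assoc, mul_smul_comm, mul_assoc]
    _ = q ^ (-(c * d)) • (↑(z3 ^ a) * ((q ^ (b * d) • (↑(z3 ^ d) * ↑(z2 ^ b))) *
          ((q ^ (c * e) • (↑(z2 ^ e) * ↑(z1 ^ c))) * ↑(z1 ^ f)))) := by
        rw [Units.zpow_mul_zpow_eq_smul_of_mul_eq_smul hq h23,
          Units.zpow_mul_zpow_eq_smul_of_mul_eq_smul hq h12]
    _ = q ^ (b * d + c * e - c * d) •
          (↑(z3 ^ (a + d) * z2 ^ (b + e) * z1 ^ (c + f)) : A) := by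
        simp only [smul_mul_assoc, mul_smul_comm, smul_smul, zpow_add, Units.val_mul, mul_assoc]
        rw [← zpow_add₀ hq, ← zpow_add₀ hq]
        ring_nf

lemma quantumTorus_br_monomial (hq : q ≠ 0)
    (h12 : (↑z1 * ↑z2 : A) = q • (↑z2 * ↑z1 : A))
    (h23 : (↑z2 * ↑z3 : A) = q • (↑z3 * ↑z2 : A))
    (h31 : (↑z3 * ↑z1 : A) = q • (↑z1 * ↑z3 : A))
    (a b c d e f : ℤ) :
    br (↑(z3 ^ a * z2 ^ b * z1 ^ c) : A) ↑(z3 ^ d * z2 ^ e * z1 ^ f) =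
      (q ^ (b * d + c * e - c * d) - q ^ (e * a + f * b - f * a)) •
        (↑(z3 ^ (a + d) * z2 ^ (b + e) * z1 ^ (c + f)) : A) := by
  rw [br, quantumTorus_monomial_mul hq h12 h23 h31, quantumTorus_monomial_mul hq h12 h23 h31,
    add_comm d, add_comm e, add_comm f, sub_smul]

end QuantumTorus

theorem bracket_gives_z1_pow_general
    {F : Type*} [Field F] {A : Type*} [Ring A] [Algebra F A]
    (q : F) (hq : q ≠ 0)
    (z1 z2 z3 : Aˣ)
    (h12 : (↑z1 * ↑z2 : A) = q • (↑z2 * ↑z1 : A))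
    (h23 : (↑z2 * ↑z3 : A) = q • (↑z3 * ↑z2 : A))
    (h31 : (↑z3 * ↑z1 : A) = q • (↑z1 * ↑z3 : A))
    (h : ℤ) :
    br (↑(z3 * z2 ^ 2 * z1) : A) (↑(z3⁻¹ * z2 ^ (-2 : ℤ) * z1 ^ (h - 1)) : A) =
      (q ^ (-3 : ℤ) * (1 - q ^ h)) • (↑(z1 ^ h) : A) := by
  have hU : z3 * z2 ^ 2 * z1 = z3 ^ (1 : ℤ) * z2 ^ (2 : ℤ) * z1 ^ (1 : ℤ) := by
    rw [zpow_one, zpow_one, zpow_ofNat]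
  rw [hU, ← zpow_neg_one, quantumTorus_br_monomial hq h12 h23 h31]
  congr 1
  · rw [mul_sub, mul_one, ← zpow_add₀ hq]
    ring_nf
  · simp

/-- For every integer `h`, the identity
`[z₃ z₂² z₁, z₃⁻¹ z₂⁻² z₁^{h-1}] = q⁻³ (1 - q^h) z₁^h` holds in `A_q`. -/
theorem bracket_gives_z1_pow
    {F : Type*} [Field F] {A : Type*} [Ring A] [Algebra F A]
    (q : F) (hq : q ≠ 0)
    (z1 z2 z3 : Aˣ)
    (h12 : (↑z1 * ↑z2 : A) = q • (↑z2 * ↑z1 : A))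
    (h23 : (↑z2 * ↑z3 : A) = q • (↑z3 * ↑z2 : A))
    (h31 : (↑z3 * ↑z1 : A) = q • (↑z1 * ↑z3 : A))
    (b : Module.Basis (ℤ × ℤ × ℤ) F A)
    (hb : ∀ t : ℤ × ℤ × ℤ, b t = (↑(z3 ^ t.1 * z2 ^ t.2.1 * z1 ^ t.2.2) : A))
    (h : ℤ) :
    br (↑(z3 * z2 ^ 2 * z1) : A) (↑(z3⁻¹ * z2 ^ (-2 : ℤ) * z1 ^ (h - 1)) : A) =
      (q ^ (-3 : ℤ) * (1 - q ^ h)) • (↑(z1 ^ h) : A) :=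
  bracket_gives_z1_pow_general q hq z1 z2 z3 h12 h23 h31 h
end

section
/- For every nonzero integer h, the elements z_3^h, z_2^h, and z_1^h of A_q belong to L_q. -/
attribute [local instance 100] LieRing.ofAssociativeRing

/-- `L_q`: the Lie subalgebra of `A_q` (under the commutator bracket `[U,V] = UV - VU`)
generated by `z₁, z₁⁻¹, z₂, z₂⁻¹, z₃, z₃⁻¹`. -/
def LqSub (F : Type*) [Field F] {A : Type*} [Ring A] [Algebra F A]
    (z1 z2 z3 : Aˣ) : LieSubalgebra F A :=
  LieSubalgebra.lieSpan F A
    {(↑z1 : A), (↑z1⁻¹ : A), (↑z2 : A), (↑z2⁻¹ : A), (↑z3 : A), (↑z3⁻¹ : A)}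

/-!
If `a * b = c • (b * a)` then `⁅a, b⁆ = (c - 1) • (b * a)`, so for `c ≠ 1` a Lie subalgebra
containing `a` and `b` also contains the product `b * a`. For units with `u * v = q • (v * u)`
one has `u ^ m * v = q ^ m • (v * u ^ m)`; bracketing with `u` and `u⁻¹` therefore moves
`v * u ^ k` through all `k ∈ ℤ`, and the bracket of `v * u ^ h` with `v⁻¹` is
`(q⁻¹ ^ h - 1) • u ^ h`, which is a nonzero multiple of `u ^ h` when `q ^ h ≠ 1`.
-/

section

variable {F A : Type*} [Field F] [Ring A] [Algebra F A]

theorem Units.zpow_mul_eq_smul_mul {q : F} (hq : q ≠ 0) {u v : Aˣ}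
    (huv : (u * v : A) = q • (v * u : A)) (m : ℤ) :
    (↑(u ^ m) * ↑v : A) = q ^ m • (↑v * ↑(u ^ m) : A) := by
  set c : Aˣ := Units.map (algebraMap F A : F →* A) (Units.mk0 q hq)
  have hc : Commute c u := Units.ext (Algebra.commutes q (u : A))
  -- conjugation by `v` multiplies `u` by the central unit `c`
  have hsemi : SemiconjBy v (c * u) u := by
    ext
    simp [c, huv, Algebra.smul_def, Algebra.left_comm]
  have := congrArg Units.val (hsemi.zpow_right m).eq
  rw [hc.mul_zpow, Units.val_mul, Units.val_mul, Units.val_mul, ← map_zpow, Units.coe_map] at this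
  simpa [Algebra.smul_def, Algebra.commutes, mul_assoc] using this.symm

namespace LieSubalgebra

variable (L : LieSubalgebra F A)

theorem mul_mem_of_mul_eq_smul_mul {a b : A} {c : F} (ha : a ∈ L) (hb : b ∈ L)
    (hab : a * b = c • (b * a)) (hc : c ≠ 1) : b * a ∈ L := by
  have hlie : ⁅a, b⁆ = (c - 1) • (b * a) := by rw [Ring.lie_def, hab, sub_smul, one_smul]
  have hmem := L.lie_mem ha hb
  rw [hlie] at hmem
  exact (Submodule.smul_mem_iff L.toSubmodule (sub_ne_zero.2 hc)).1 hmem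

theorem mul_zpow_mem_of_mul_eq_smul_mul {q : F} (hq : q ≠ 0) (hq1 : q ≠ 1) {u v : Aˣ}
    (huv : (u * v : A) = q • (v * u : A)) (hu : (u : A) ∈ L) (hu' : (↑u⁻¹ : A) ∈ L)
    (hv : (v : A) ∈ L) (k : ℤ) : (↑v * ↑(u ^ k) : A) ∈ L := by
  have step : ∀ e j : ℤ, q ^ e ≠ 1 → (↑(u ^ e) : A) ∈ L → (↑v * ↑(u ^ j) : A) ∈ L →
      (↑v * ↑(u ^ (j + e)) : A) ∈ L := by
    intro e j he hue hj
    have hcomm : (↑(u ^ e) * (↑v * ↑(u ^ j)) : A) = q ^ e • ((↑v * ↑(u ^ j)) * ↑(u ^ e)) := by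
      rw [← mul_assoc, Units.zpow_mul_eq_smul_mul hq huv, smul_mul_assoc, mul_assoc, mul_assoc,
        ((Commute.refl u).zpow_zpow e j).units_val.eq]
    have hmem := L.mul_mem_of_mul_eq_smul_mul hue hj hcomm he
    rwa [mul_assoc, ← Units.val_mul, ← zpow_add] at hmem
  induction k using Int.induction_on with
  | zero => simpa using hv
  | succ i ih => exact step 1 i (by simpa using hq1) (by simpa using hu) ih
  | pred i ih =>
    rw [sub_eq_add_neg]
    exact step (-1) (-i) (by simpa using hq1) (by simpa using hu') ih

theorem zpow_mem_of_mul_eq_smul_mul {q : F} (hq : q ≠ 0) (hq1 : q ≠ 1) {u v : Aˣ}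
    (huv : (u * v : A) = q • (v * u : A)) (hu : (u : A) ∈ L) (hu' : (↑u⁻¹ : A) ∈ L)
    (hv : (v : A) ∈ L) (hv' : (↑v⁻¹ : A) ∈ L) {h : ℤ} (hqh : q ^ h ≠ 1) :
    (↑(u ^ h) : A) ∈ L := by
  have hconj : (↑v * ↑(u ^ h)) * ↑v⁻¹ = (q ^ h)⁻¹ • (↑v⁻¹ * (↑v * ↑(u ^ h)) : A) := by
    rw [← mul_assoc, Units.inv_mul, one_mul, eq_inv_smul_iff₀ (zpow_ne_zero h hq),
      ← smul_mul_assoc, ← Units.zpow_mul_eq_smul_mul hq huv, mul_assoc, Units.mul_inv, mul_one]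
  have hmem := L.mul_mem_of_mul_eq_smul_mul
    (L.mul_zpow_mem_of_mul_eq_smul_mul hq hq1 huv hu hu' hv h) hv' hconj (inv_ne_one.2 hqh)
  rwa [← mul_assoc, Units.inv_mul, one_mul] at hmem

end LieSubalgebra

end

theorem zpow_mem_Lq_general
    {F : Type*} [Field F] {A : Type*} [Ring A] [Algebra F A]
    (q : F) (hq : q ≠ 0) (hqru : ∀ n : ℕ, 0 < n → q ^ n ≠ 1)
    (z1 z2 z3 : Aˣ)
    (h12 : (↑z1 * ↑z2 : A) = q • (↑z2 * ↑z1 : A))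
    (h23 : (↑z2 * ↑z3 : A) = q • (↑z3 * ↑z2 : A))
    (h31 : (↑z3 * ↑z1 : A) = q • (↑z1 * ↑z3 : A))
    (h : ℤ) (hh : h ≠ 0) :
    (↑(z3 ^ h) : A) ∈ LqSub F z1 z2 z3 ∧
    (↑(z2 ^ h) : A) ∈ LqSub F z1 z2 z3 ∧
    (↑(z1 ^ h) : A) ∈ LqSub F z1 z2 z3 := by
  have hq1 : q ≠ 1 := by simpa using hqru 1 one_pos
  have hqh : q ^ h ≠ 1 := by
    obtain ⟨n, rfl | rfl⟩ := Int.eq_nat_or_neg h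
    all_goals simpa using hqru n (by omega)
  set L := LqSub F z1 z2 z3
  refine ⟨L.zpow_mem_of_mul_eq_smul_mul hq hq1 h31 ?_ ?_ ?_ ?_ hqh,
    L.zpow_mem_of_mul_eq_smul_mul hq hq1 h23 ?_ ?_ ?_ ?_ hqh,
    L.zpow_mem_of_mul_eq_smul_mul hq hq1 h12 ?_ ?_ ?_ ?_ hqh⟩ <;>
  exact LieSubalgebra.subset_lieSpan (by simp)

/-- For any nonzero integer `h`, the elements `z₃^h`, `z₂^h`, `z₁^h`
of `A_q` belong to `L_q`. -/
theorem zpow_mem_Lq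
    {F : Type*} [Field F] {A : Type*} [Ring A] [Algebra F A]
    (q : F) (hq : q ≠ 0) (hqru : ∀ n : ℕ, 0 < n → q ^ n ≠ 1)
    (z1 z2 z3 : Aˣ)
    (h12 : (↑z1 * ↑z2 : A) = q • (↑z2 * ↑z1 : A))
    (h23 : (↑z2 * ↑z3 : A) = q • (↑z3 * ↑z2 : A))
    (h31 : (↑z3 * ↑z1 : A) = q • (↑z1 * ↑z3 : A))
    (b : Module.Basis (ℤ × ℤ × ℤ) F A)
    (hb : ∀ t : ℤ × ℤ × ℤ, b t = (↑(z3 ^ t.1 * z2 ^ t.2.1 * z1 ^ t.2.2) : A))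
    (h : ℤ) (hh : h ≠ 0) :
    (↑(z3 ^ h) : A) ∈ LqSub F z1 z2 z3 ∧
    (↑(z2 ^ h) : A) ∈ LqSub F z1 z2 z3 ∧
    (↑(z1 ^ h) : A) ∈ LqSub F z1 z2 z3 :=
  zpow_mem_Lq_general q hq hqru z1 z2 z3 h12 h23 h31 h hh
end

section
/- For all nonzero integers h, m, n: the elements z_3^h z_2^m, z_3^h z_1^m, and z_2^h z_1^m belong to L_q; if h ≠ m then z_3^h z_2^m z_1^n belongs to L_q; and if h ≠ n then z_3^h z_2^h z_1^n belongs to L_q. -/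
attribute [local instance] LieRing.ofAssociativeRing

/-!
Write `z^(a,b,c) = z₃^a z₂^b z₁^c`. Moving the factors past each other gives
`z^u z^v = q^β(u,v) z^(u+v)` for an integer bilinear form `β`, so
`[z^u, z^v] = (q^β(u,v) - q^β(v,u)) z^(u+v)`, and the scalar is nonzero as soon as
`β(u,v) ≠ β(v,u)`, because `q` is not a root of unity. Bracketing with `z₃^{±1}`, `z₁^{±1}`,
`z₂^{±1}` therefore moves a monomial of `L_q` one step along the first, third or second
exponent, as long as the other two exponents differ. A walk through such steps reaches every
exponent triple off the diagonal `a = b = c` from `(0,1,0)` or `(1,0,0)`.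
-/

section Group

variable {G : Type*} [Group G] {c u v : G}

theorem mul_zpow_of_mul_eq_mul_mul (hc : c ∈ Subgroup.center G) (h : u * v = c * (v * u))
    (n : ℤ) : u * v ^ n = c ^ n * (v ^ n * u) := by
  have hsemi : SemiconjBy u v (c * v) := by rw [SemiconjBy, h, mul_assoc]
  have := hsemi.zpow_right n
  rwa [SemiconjBy, Commute.mul_zpow (Subgroup.mem_center_iff.mp hc v).symm, mul_assoc] at this

theorem zpow_mul_zpow_of_mul_eq_mul_mul (hc : c ∈ Subgroup.center G) (h : u * v = c * (v * u))
    (a b : ℤ) : u ^ a * v ^ b = c ^ (a * b) * (v ^ b * u ^ a) := by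
  have hflip : v ^ b * u = (c ^ b)⁻¹ * (u * v ^ b) := by
    rw [mul_zpow_of_mul_eq_mul_mul hc h b, inv_mul_cancel_left]
  rw [mul_zpow_of_mul_eq_mul_mul (inv_mem (zpow_mem hc b)) hflip a, inv_zpow', ← zpow_mul,
    ← mul_assoc, ← zpow_add, show a * b + b * -a = 0 by ring, zpow_zero, one_mul]

end Group

theorem zpow_injective_of_pow_ne_one {G₀ : Type*} [GroupWithZero G₀] {q : G₀} (hq : q ≠ 0)
    (h : ∀ n : ℕ, 0 < n → q ^ n ≠ 1) : Function.Injective fun n : ℤ => q ^ n := by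
  have hu : ¬IsOfFinOrder (Units.mk0 q hq) := by
    rw [← Units.isOfFinOrder_val, isOfFinOrder_iff_pow_eq_one]
    simpa using h
  intro m n hmn
  exact injective_zpow_iff_not_isOfFinOrder.mpr hu (Units.ext (by simpa using hmn))

/-- In `L_q`, with `P a b c` meaning `z₃^a z₂^b z₁^c ∈ L_q`, these steps are brackets with
`z₃^{±1}`; rotating the arguments of `P` gives the brackets with `z₁^{±1}` and `z₂^{±1}`. -/
def IsFstStepClosed (P : ℤ → ℤ → ℤ → Prop) : Prop :=
  ∀ a b c, b ≠ c → P a b c → P (a + 1) b c ∧ P (a - 1) b c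

namespace IsFstStepClosed

variable {P : ℤ → ℤ → ℤ → Prop}

theorem forall_fst (hP : IsFstStepClosed P) {a b c : ℤ} (hbc : b ≠ c) (h : P a b c) (a' : ℤ) :
    P a' b c :=
  Int.inductionOn' a' a h (fun k _ hk => (hP k b c hbc hk).1) (fun k _ hk => (hP k b c hbc hk).2)

theorem of_fst_ne_snd (h₁ : IsFstStepClosed P) (h₂ : IsFstStepClosed fun a b c => P b c a)
    (h₃ : IsFstStepClosed fun a b c => P c a b) (h010 : P 0 1 0) {a b c : ℤ} (hab : a ≠ b) :
    P a b c := by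
  obtain ⟨N, hN0, hbN⟩ : ∃ N : ℤ, N ≠ 0 ∧ b ≠ N := ⟨max b 0 + 1, by omega, by omega⟩
  have h01N : P 0 1 N := h₂.forall_fst zero_ne_one h010 N
  have h0bN : P 0 b N := h₃.forall_fst hN0 h01N b
  have habN : P a b N := h₁.forall_fst hbN h0bN a
  exact h₂.forall_fst hab habN c

theorem of_not_diagonal (h₁ : IsFstStepClosed P) (h₂ : IsFstStepClosed fun a b c => P b c a)
    (h₃ : IsFstStepClosed fun a b c => P c a b) (h100 : P 1 0 0) (h010 : P 0 1 0)
    {a b c : ℤ} (h : ¬(a = b ∧ b = c)) : P a b c := by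
  rcases ne_or_eq a b with hab | rfl
  · exact of_fst_ne_snd h₁ h₂ h₃ h010 hab
  · exact of_fst_ne_snd (P := fun a b c => P b c a) h₂ h₃ h₁ h100
      (by rintro rfl; exact h ⟨rfl, rfl⟩)

end IsFstStepClosed

section Algebra

variable {F A : Type*} [Field F] [Ring A] [Algebra F A]

theorem Units.zpow_mul_zpow_of_mul_eq_smul_s11 {r : F} (hr : r ≠ 0) {u v : Aˣ}
    (h : (u * v : A) = r • (v * u : A)) (a b : ℤ) :
    (↑(u ^ a) * ↑(v ^ b) : A) = r ^ (a * b) • (↑(v ^ b) * ↑(u ^ a) : A) := by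
  let c : Aˣ := Units.map (algebraMap F A : F →* A) (Units.mk0 r hr)
  have hc_val : ∀ n : ℤ, (↑(c ^ n) : A) = algebraMap F A (r ^ n) := fun n => by
    simp [c, ← map_zpow]
  have hc : c ∈ Subgroup.center Aˣ :=
    Subgroup.mem_center_iff.mpr fun g => Units.ext <| by
      simpa [c] using (Algebra.commutes r (g : A)).symm
  have hgroup : u * v = c * (v * u) := Units.ext <| by
    simpa [Algebra.smul_def, c] using h
  simpa [Algebra.smul_def, hc_val] using
    congrArg Units.val (zpow_mul_zpow_of_mul_eq_mul_mul hc hgroup a b)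

structure IsQCommutingTriple (q : F) (z1 z2 z3 : Aˣ) : Prop where
  ne_zero : q ≠ 0
  mul₁₂ : (z1 * z2 : A) = q • (z2 * z1 : A)
  mul₂₃ : (z2 * z3 : A) = q • (z3 * z2 : A)
  mul₃₁ : (z3 * z1 : A) = q • (z1 * z3 : A)

theorem subset_lqSub {z1 z2 z3 : Aˣ} :
    ({↑z1, ↑z1⁻¹, ↑z2, ↑z2⁻¹, ↑z3, ↑z3⁻¹} : Set A) ⊆ LqSub F z1 z2 z3 :=
  LieSubalgebra.subset_lieSpan

namespace IsQCommutingTriple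

variable {q : F} {z1 z2 z3 : Aˣ}

theorem monomial_mul_monomial (hz : IsQCommutingTriple q z1 z2 z3) (a b c d e f : ℤ) :
    (↑(z3 ^ a * z2 ^ b * z1 ^ c) * ↑(z3 ^ d * z2 ^ e * z1 ^ f) : A)
      = q ^ (b * d - c * d + c * e) • (↑(z3 ^ (a + d) * z2 ^ (b + e) * z1 ^ (c + f)) : A) := by
  have mul₁₃ : (z1 * z3 : A) = q⁻¹ • (z3 * z1 : A) := by
    rw [hz.mul₃₁, inv_smul_smul₀ hz.ne_zero]
  have h13 := Units.zpow_mul_zpow_of_mul_eq_smul_s11 (inv_ne_zero hz.ne_zero) mul₁₃ c d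
  have h23 := Units.zpow_mul_zpow_of_mul_eq_smul_s11 hz.ne_zero hz.mul₂₃ b d
  have h12 := Units.zpow_mul_zpow_of_mul_eq_smul_s11 hz.ne_zero hz.mul₁₂ c e
  simp only [Units.val_mul, zpow_add, mul_assoc]
  rw [← mul_assoc (↑(z1 ^ c) : A), h13]
  simp only [smul_mul_assoc, mul_smul_comm, mul_assoc]
  rw [← mul_assoc (↑(z2 ^ b) : A), h23, ← mul_assoc (↑(z1 ^ c) : A) (↑(z2 ^ e) : A), h12]
  simp only [smul_mul_assoc, mul_smul_comm, mul_assoc, smul_smul]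
  congr 1
  rw [inv_zpow', ← zpow_add₀ hz.ne_zero, ← zpow_add₀ hz.ne_zero]
  congr 1
  ring

theorem lie_monomial_monomial (hz : IsQCommutingTriple q z1 z2 z3) (a b c d e f : ℤ) :
    ⁅(↑(z3 ^ a * z2 ^ b * z1 ^ c) : A), (↑(z3 ^ d * z2 ^ e * z1 ^ f) : A)⁆
      = (q ^ (b * d - c * d + c * e) - q ^ (e * a - f * a + f * b))
          • (↑(z3 ^ (a + d) * z2 ^ (b + e) * z1 ^ (c + f)) : A) := by
  rw [Ring.lie_def, hz.monomial_mul_monomial, hz.monomial_mul_monomial,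
    add_comm d, add_comm e, add_comm f, sub_smul]

theorem monomial_mem_of_lie {L : LieSubalgebra F A} (hz : IsQCommutingTriple q z1 z2 z3)
    (hq : Function.Injective fun n : ℤ => q ^ n) {a b c d e f : ℤ}
    (h : b * d - c * d + c * e ≠ e * a - f * a + f * b)
    (habc : (↑(z3 ^ a * z2 ^ b * z1 ^ c) : A) ∈ L)
    (hdef : (↑(z3 ^ d * z2 ^ e * z1 ^ f) : A) ∈ L) :
    (↑(z3 ^ (a + d) * z2 ^ (b + e) * z1 ^ (c + f)) : A) ∈ L := by
  have hlie := L.lie_mem habc hdef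
  rw [hz.lie_monomial_monomial] at hlie
  exact (L.toSubmodule.smul_mem_iff (sub_ne_zero.mpr (hq.ne h))).mp hlie

theorem isFstStepClosed_mem_lqSub (hz : IsQCommutingTriple q z1 z2 z3)
    (hq : Function.Injective fun n : ℤ => q ^ n) :
    IsFstStepClosed (fun a b c => (↑(z3 ^ a * z2 ^ b * z1 ^ c) : A) ∈ LqSub F z1 z2 z3) ∧
    IsFstStepClosed (fun a b c => (↑(z3 ^ b * z2 ^ c * z1 ^ a) : A) ∈ LqSub F z1 z2 z3) ∧
    IsFstStepClosed (fun a b c => (↑(z3 ^ c * z2 ^ a * z1 ^ b) : A) ∈ LqSub F z1 z2 z3) := by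
  refine ⟨fun a b c hbc h => ⟨?_, ?_⟩, fun a b c hbc h => ⟨?_, ?_⟩, fun a b c hbc h => ⟨?_, ?_⟩⟩
  · simpa using
      hz.monomial_mem_of_lie hq (d := 1) (e := 0) (f := 0) (by omega) h (subset_lqSub (by simp))
  · simpa [sub_eq_add_neg] using
      hz.monomial_mem_of_lie hq (d := -1) (e := 0) (f := 0) (by omega) h (subset_lqSub (by simp))
  · simpa using
      hz.monomial_mem_of_lie hq (d := 0) (e := 0) (f := 1) (by omega) h (subset_lqSub (by simp))
  · simpa [sub_eq_add_neg] using
      hz.monomial_mem_of_lie hq (d := 0) (e := 0) (f := -1) (by omega) h (subset_lqSub (by simp))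
  · simpa using
      hz.monomial_mem_of_lie hq (d := 0) (e := 1) (f := 0) (by omega) h (subset_lqSub (by simp))
  · simpa [sub_eq_add_neg] using
      hz.monomial_mem_of_lie hq (d := 0) (e := -1) (f := 0) (by omega) h (subset_lqSub (by simp))

end IsQCommutingTriple

end Algebra

theorem monomials_mem_Lq_general
    {F : Type*} [Field F] {A : Type*} [Ring A] [Algebra F A]
    (q : F) (hq : q ≠ 0) (hqru : ∀ n : ℕ, 0 < n → q ^ n ≠ 1)
    (z1 z2 z3 : Aˣ)
    (h12 : (↑z1 * ↑z2 : A) = q • (↑z2 * ↑z1 : A))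
    (h23 : (↑z2 * ↑z3 : A) = q • (↑z3 * ↑z2 : A))
    (h31 : (↑z3 * ↑z1 : A) = q • (↑z1 * ↑z3 : A))
    (h m n : ℤ) (hh : h ≠ 0) :
    (↑(z3 ^ h * z2 ^ m) : A) ∈ LqSub F z1 z2 z3 ∧
    (↑(z3 ^ h * z1 ^ m) : A) ∈ LqSub F z1 z2 z3 ∧
    (↑(z2 ^ h * z1 ^ m) : A) ∈ LqSub F z1 z2 z3 ∧
    (h ≠ m → (↑(z3 ^ h * z2 ^ m * z1 ^ n) : A) ∈ LqSub F z1 z2 z3) ∧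
    (h ≠ n → (↑(z3 ^ h * z2 ^ h * z1 ^ n) : A) ∈ LqSub F z1 z2 z3) := by
  have hz : IsQCommutingTriple q z1 z2 z3 := ⟨hq, h12, h23, h31⟩
  obtain ⟨h₁, h₂, h₃⟩ := hz.isFstStepClosed_mem_lqSub (zpow_injective_of_pow_ne_one hq hqru)
  have hmem : ∀ a b c : ℤ, ¬(a = b ∧ b = c) →
      (↑(z3 ^ a * z2 ^ b * z1 ^ c) : A) ∈ LqSub F z1 z2 z3 := fun a b c =>
    h₁.of_not_diagonal h₂ h₃ (by simpa using subset_lqSub (by simp))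
      (by simpa using subset_lqSub (by simp))
  refine ⟨?_, ?_, ?_, fun hhm => hmem h m n (by omega), fun hhn => hmem h h n (by omega)⟩
  · simpa using hmem h m 0 (by omega)
  · simpa using hmem h 0 m (by omega)
  · simpa using hmem 0 h m (by omega)

/-- For all nonzero integers `h, m, n`: the elements `z₃^h z₂^m`,
`z₃^h z₁^m`, and `z₂^h z₁^m` belong to `L_q`; if `h ≠ m` then `z₃^h z₂^m z₁^n ∈ L_q`;
and if `h ≠ n` then `z₃^h z₂^h z₁^n ∈ L_q`. -/
theorem monomials_mem_Lq
    {F : Type*} [Field F] {A : Type*} [Ring A] [Algebra F A]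
    (q : F) (hq : q ≠ 0) (hqru : ∀ n : ℕ, 0 < n → q ^ n ≠ 1)
    (z1 z2 z3 : Aˣ)
    (h12 : (↑z1 * ↑z2 : A) = q • (↑z2 * ↑z1 : A))
    (h23 : (↑z2 * ↑z3 : A) = q • (↑z3 * ↑z2 : A))
    (h31 : (↑z3 * ↑z1 : A) = q • (↑z1 * ↑z3 : A))
    (b : Module.Basis (ℤ × ℤ × ℤ) F A)
    (hb : ∀ t : ℤ × ℤ × ℤ, b t = (↑(z3 ^ t.1 * z2 ^ t.2.1 * z1 ^ t.2.2) : A))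
    (h m n : ℤ) (hh : h ≠ 0) (hm : m ≠ 0) (hn : n ≠ 0) :
    (↑(z3 ^ h * z2 ^ m) : A) ∈ LqSub F z1 z2 z3 ∧
    (↑(z3 ^ h * z1 ^ m) : A) ∈ LqSub F z1 z2 z3 ∧
    (↑(z2 ^ h * z1 ^ m) : A) ∈ LqSub F z1 z2 z3 ∧
    (h ≠ m → (↑(z3 ^ h * z2 ^ m * z1 ^ n) : A) ∈ LqSub F z1 z2 z3) ∧
    (h ≠ n → (↑(z3 ^ h * z2 ^ h * z1 ^ n) : A) ∈ LqSub F z1 z2 z3) :=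
  monomials_mem_Lq_general q hq hqru z1 z2 z3 h12 h23 h31 h m n hh
end

section
/- The vector space A_q is the internal direct sum of L_q and the F-linear span of the set {z_3^h z_2^h z_1^h : h ∈ ℤ}; that is, these two subspaces intersect trivially and their sum is all of A_q. -/
/-!
Write `m(a,b,c) = z₃^a z₂^b z₁^c`. Reordering a product of two monomials gives
`m(t) m(u) = q^{φ(t,u)} m(t+u)` for an explicit bilinear `φ`, so
`[m(t), m(u)] = (q^{φ(t,u)} - q^{φ(u,t)}) m(t+u)`, and `φ(t,u) = φ(u,t)` whenever `t + u` is
diagonal. Hence the span of the off-diagonal monomials contains every commutator, so it is a Lie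
subalgebra containing the generators and therefore contains `L_q`. Conversely, since `q` is not a
root of unity, bracketing with a generator `m(±eᵢ)` moves a monomial of `L_q` along the `i`-th
coordinate as long as its other two coordinates differ, and such moves reach every off-diagonal
monomial. So `L_q` is exactly the span of the off-diagonal part of the monomial basis.
-/

attribute [local instance 100] LieRing.ofAssociativeRing

section Group

variable {G : Type*} [Group G] {Q u v : G}

theorem mul_zpow_eq_of_mul_eq (hQ : ∀ g, Commute Q g) (h : u * v = Q * (v * u)) (n : ℤ) :
    u * v ^ n = Q ^ n * (v ^ n * u) := by
  have : SemiconjBy u v (Q * v) := by rw [SemiconjBy, h, mul_assoc]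
  simpa [SemiconjBy, (hQ v).mul_zpow, mul_assoc] using this.zpow_right n

theorem zpow_mul_zpow_eq_of_mul_eq (hQ : ∀ g, Commute Q g) (h : u * v = Q * (v * u))
    (m n : ℤ) : u ^ m * v ^ n = Q ^ (m * n) * (v ^ n * u ^ m) := by
  have h' : v ^ n * u = (Q ^ n)⁻¹ * (u * v ^ n) := by
    rw [mul_zpow_eq_of_mul_eq hQ h, inv_mul_cancel_left]
  rw [mul_zpow_eq_of_mul_eq (fun g => ((hQ g).zpow_left n).inv_left) h' m]
  group

end Group

theorem zpow_injective_of_not_isOfFinOrder {G₀ : Type*} [GroupWithZero G₀] {x : G₀}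
    (hx : x ≠ 0) (h : ¬IsOfFinOrder x) : Function.Injective (x ^ · : ℤ → G₀) := by
  have hu : Function.Injective ((Units.mk0 x hx) ^ · : ℤ → G₀ˣ) :=
    injective_zpow_iff_not_isOfFinOrder.2 (by rwa [← Units.isOfFinOrder_val])
  intro m n hmn
  exact hu (Units.ext (by simpa [Units.val_zpow_eq_zpow_val] using hmn))

theorem Units.zpow_mul_zpow_eq_smul {F A : Type*} [Field F] [Ring A] [Algebra F A] {q : F}
    (hq : q ≠ 0) {u v : Aˣ} (h : (u * v : A) = q • (v * u : A)) (m n : ℤ) :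
    (↑(u ^ m) * ↑(v ^ n) : A) = q ^ (m * n) • (↑(v ^ n) * ↑(u ^ m) : A) := by
  set Q : Aˣ := Units.map (algebraMap F A : F →* A) (Units.mk0 q hq)
  have hQ_val (k : ℤ) : (↑(Q ^ k) : A) = algebraMap F A (q ^ k) := by
    rw [← map_zpow, Units.coe_map, Units.val_zpow_eq_zpow_val, Units.val_mk0]
    rfl
  have hQ (g : Aˣ) : Commute Q g := Units.ext (by simp [Q, Algebra.commutes])
  have key := congrArg Units.val <|
    zpow_mul_zpow_eq_of_mul_eq hQ (Units.ext (by simpa [Algebra.smul_def, Q] using h)) m n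
  simpa [Algebra.smul_def, hQ_val] using key

theorem Module.Basis.lie_mem_of_forall_lie_mem {R L ι : Type*} [CommRing R] [LieRing L]
    [LieAlgebra R L] (b : Module.Basis ι R L) {S : Submodule R L}
    (h : ∀ i j, ⁅b i, b j⁆ ∈ S) (x y : L) : ⁅x, y⁆ ∈ S := by
  have hB : (LieModule.toEnd R L L : L →ₗ[R] L →ₗ[R] L).compr₂ S.mkQ = 0 :=
    b.ext fun i => b.ext fun j => by simpa [Submodule.Quotient.mk_eq_zero] using h i j
  simpa [Submodule.Quotient.mk_eq_zero] using LinearMap.congr_fun₂ hB x y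

namespace QuantumTorus

variable {F : Type*} [Field F] {A : Type*} [Ring A] [Algebra F A]

structure Relations (q : F) (z1 z2 z3 : Aˣ) : Prop where
  mul12 : (z1 * z2 : A) = q • (z2 * z1 : A)
  mul23 : (z2 * z3 : A) = q • (z3 * z2 : A)
  mul31 : (z3 * z1 : A) = q • (z1 * z3 : A)

def monomial (z1 z2 z3 : Aˣ) (t : ℤ × ℤ × ℤ) : A := ↑(z3 ^ t.1 * z2 ^ t.2.1 * z1 ^ t.2.2)

def twist (t u : ℤ × ℤ × ℤ) : ℤ := t.2.1 * u.1 + t.2.2 * u.2.1 - t.2.2 * u.1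

def diagonal : Set (ℤ × ℤ × ℤ) := Set.range fun h => (h, h, h)

def generators : Set (ℤ × ℤ × ℤ) :=
  {(0, 0, 1), (0, 0, -1), (0, 1, 0), (0, -1, 0), (1, 0, 0), (-1, 0, 0)}

theorem twist_comm_of_add_mem_diagonal {t u : ℤ × ℤ × ℤ} (h : t + u ∈ diagonal) :
    twist t u = twist u t := by
  obtain ⟨a, b, c⟩ := t
  obtain ⟨d, e, f⟩ := u
  obtain ⟨s, hs⟩ := h
  simp only [Prod.mk_add_mk, Prod.mk.injEq] at hs
  obtain ⟨h1, h2, h3⟩ := hs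
  simp only [twist]
  linear_combination (c - b) * h1 + (a - c) * h2 + (b - a) * h3

theorem generators_subset_compl_diagonal : generators ⊆ diagonalᶜ := by
  rintro t ht ⟨s, rfl⟩
  simp only [generators, Set.mem_insert_iff, Set.mem_singleton_iff, Prod.mk.injEq] at ht
  omega

variable {q : F} {z1 z2 z3 : Aˣ}

theorem image_monomial_generators :
    monomial z1 z2 z3 '' generators =
      {(↑z1 : A), (↑z1⁻¹ : A), (↑z2 : A), (↑z2⁻¹ : A), (↑z3 : A), (↑z3⁻¹ : A)} := by
  simp [generators, monomial, Set.image_insert_eq]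

theorem monomial_mul (hq : q ≠ 0) (hz : Relations q z1 z2 z3) (t u : ℤ × ℤ × ℤ) :
    monomial z1 z2 z3 t * monomial z1 z2 z3 u = q ^ twist t u • monomial z1 z2 z3 (t + u) := by
  obtain ⟨a, b, c⟩ := t
  obtain ⟨d, e, f⟩ := u
  have h13 : (z1 * z3 : A) = q⁻¹ • (z3 * z1 : A) := by rw [hz.mul31, inv_smul_smul₀ hq]
  have e13 : (↑(z1 ^ c) * ↑(z3 ^ d) : A) = q ^ (-(c * d)) • (↑(z3 ^ d) * ↑(z1 ^ c) : A) := by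
    rw [Units.zpow_mul_zpow_eq_smul (inv_ne_zero hq) h13, inv_zpow']
  have e23 := Units.zpow_mul_zpow_eq_smul hq hz.mul23 b d
  have e12 := Units.zpow_mul_zpow_eq_smul hq hz.mul12 c e
  simp only [monomial, twist, Prod.mk_add_mk, zpow_add, Units.val_mul]
  calc (↑(z3 ^ a) * ↑(z2 ^ b) * ↑(z1 ^ c) * (↑(z3 ^ d) * ↑(z2 ^ e) * ↑(z1 ^ f)) : A)
      = ↑(z3 ^ a) * ↑(z2 ^ b) * (↑(z1 ^ c) * ↑(z3 ^ d)) * ↑(z2 ^ e) * ↑(z1 ^ f) := by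
        simp only [mul_assoc]
    _ = q ^ (-(c * d)) • (↑(z3 ^ a) * (↑(z2 ^ b) * ↑(z3 ^ d)) * (↑(z1 ^ c) * ↑(z2 ^ e)) *
          ↑(z1 ^ f)) := by
        rw [e13]; simp only [smul_mul_assoc, mul_smul_comm, mul_assoc]
    _ = q ^ (-(c * d)) • q ^ (c * e) • q ^ (b * d) • (↑(z3 ^ a) * ↑(z3 ^ d) *
          (↑(z2 ^ b) * ↑(z2 ^ e)) * (↑(z1 ^ c) * ↑(z1 ^ f))) := by
        rw [e23, e12]; simp only [smul_mul_assoc, mul_smul_comm, mul_assoc]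
    _ = _ := by
        rw [smul_smul, smul_smul, ← zpow_add₀ hq, ← zpow_add₀ hq]
        simp only [mul_assoc]
        ring_nf

theorem lie_monomial (hq : q ≠ 0) (hz : Relations q z1 z2 z3) (t u : ℤ × ℤ × ℤ) :
    ⁅monomial z1 z2 z3 t, monomial z1 z2 z3 u⁆ =
      (q ^ twist t u - q ^ twist u t) • monomial z1 z2 z3 (t + u) := by
  rw [Ring.lie_def, monomial_mul hq hz, monomial_mul hq hz, add_comm u t, sub_smul]

theorem lie_monomial_mem_span_compl_diagonal (hq : q ≠ 0) (hz : Relations q z1 z2 z3)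
    (t u : ℤ × ℤ × ℤ) :
    ⁅monomial z1 z2 z3 t, monomial z1 z2 z3 u⁆ ∈
      Submodule.span F (monomial z1 z2 z3 '' diagonalᶜ) := by
  rw [lie_monomial hq hz]
  by_cases h : t + u ∈ diagonal
  · simp [twist_comm_of_add_mem_diagonal h]
  · exact Submodule.smul_mem _ _ (Submodule.subset_span ⟨_, h, rfl⟩)

theorem lqSub_le_span_compl_diagonal (hq : q ≠ 0) (hz : Relations q z1 z2 z3)
    (b : Module.Basis (ℤ × ℤ × ℤ) F A) (hb : ∀ t, b t = monomial z1 z2 z3 t) :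
    (LqSub F z1 z2 z3).toSubmodule ≤ Submodule.span F (monomial z1 z2 z3 '' diagonalᶜ) := by
  let K : LieSubalgebra F A :=
    { Submodule.span F (monomial z1 z2 z3 '' diagonalᶜ) with
      lie_mem' := fun _ _ => b.lie_mem_of_forall_lie_mem
        (fun t u => by simpa only [hb] using lie_monomial_mem_span_compl_diagonal hq hz t u) _ _ }
  have : LqSub F z1 z2 z3 ≤ K := by
    refine LieSubalgebra.lieSpan_le.2 ?_
    rw [← image_monomial_generators]
    exact (Set.image_mono generators_subset_compl_diagonal).trans Submodule.subset_span
  exact fun _ hx => this hx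

variable {L : LieSubalgebra F A}

theorem monomial_add_mem (hq : q ≠ 0) (hqo : ¬IsOfFinOrder q) (hz : Relations q z1 z2 z3)
    {t u : ℤ × ℤ × ℤ} (ht : monomial z1 z2 z3 t ∈ L) (hu : monomial z1 z2 z3 u ∈ L)
    (htu : twist t u ≠ twist u t) : monomial z1 z2 z3 (t + u) ∈ L := by
  have hs : q ^ twist t u - q ^ twist u t ≠ 0 :=
    sub_ne_zero.2 fun h => htu (zpow_injective_of_not_isOfFinOrder hq hqo h)
  have := L.smul_mem (q ^ twist t u - q ^ twist u t)⁻¹ (L.lie_mem ht hu)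
  rwa [lie_monomial hq hz, inv_smul_smul₀ hs] at this

theorem monomial_add_zsmul_mem (hq : q ≠ 0) (hqo : ¬IsOfFinOrder q) (hz : Relations q z1 z2 z3)
    {t u : ℤ × ℤ × ℤ} (ht : monomial z1 z2 z3 t ∈ L) (hu : monomial z1 z2 z3 u ∈ L)
    (hnu : monomial z1 z2 z3 (-u) ∈ L) (htu : twist t u ≠ twist u t) (k : ℤ) :
    monomial z1 z2 z3 (t + k • u) ∈ L := by
  have skew (k s : ℤ) : twist (t + k • u) (s • u) - twist (s • u) (t + k • u) =
      s * (twist t u - twist u t) := by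
    simp only [twist, Prod.fst_add, Prod.snd_add, Prod.smul_fst, Prod.smul_snd, smul_eq_mul]
    ring
  induction k using Int.induction_on with
  | zero => simpa using ht
  | succ k ih =>
    have h := skew k 1
    rw [one_smul, one_mul] at h
    rw [add_smul, one_smul, ← add_assoc]
    exact monomial_add_mem hq hqo hz ih hu fun e => htu (by linarith)
  | pred k ih =>
    have h := skew (-k) (-1)
    rw [neg_one_smul, neg_one_mul] at h
    rw [sub_smul, one_smul, sub_eq_add_neg, ← add_assoc]
    exact monomial_add_mem hq hqo hz ih hnu fun e => htu (by linarith)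

theorem monomial_mem_lqSub (hq : q ≠ 0) (hqo : ¬IsOfFinOrder q) (hz : Relations q z1 z2 z3)
    {t : ℤ × ℤ × ℤ} (ht : t ∉ diagonal) : monomial z1 z2 z3 t ∈ LqSub F z1 z2 z3 := by
  set L := LqSub F z1 z2 z3
  have gen {g : ℤ × ℤ × ℤ} (hg : g ∈ generators) : monomial z1 z2 z3 g ∈ L :=
    LieSubalgebra.subset_lieSpan <| by
      rw [← image_monomial_generators]; exact Set.mem_image_of_mem _ hg
  have move₁ {a b c : ℤ} (a' : ℤ) (h : monomial z1 z2 z3 (a, b, c) ∈ L) (hbc : b ≠ c) :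
      monomial z1 z2 z3 (a', b, c) ∈ L := by
    simpa using monomial_add_zsmul_mem (u := (1, 0, 0)) hq hqo hz h
      (gen (by simp [generators])) (gen (by simp [generators])) (by simp [twist]; omega) (a' - a)
  have move₂ {a b c : ℤ} (b' : ℤ) (h : monomial z1 z2 z3 (a, b, c) ∈ L) (hac : a ≠ c) :
      monomial z1 z2 z3 (a, b', c) ∈ L := by
    simpa using monomial_add_zsmul_mem (u := (0, 1, 0)) hq hqo hz h
      (gen (by simp [generators])) (gen (by simp [generators])) (by simp [twist]; omega) (b' - b)
  have move₃ {a b c : ℤ} (c' : ℤ) (h : monomial z1 z2 z3 (a, b, c) ∈ L) (hab : a ≠ b) :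
      monomial z1 z2 z3 (a, b, c') ∈ L := by
    simpa using monomial_add_zsmul_mem (u := (0, 0, 1)) hq hqo hz h
      (gen (by simp [generators])) (gen (by simp [generators])) (by simp [twist]; omega) (c' - c)
  have of_ne {a b c : ℤ} (hab : a ≠ b) : monomial z1 z2 z3 (a, b, c) ∈ L := by
    -- `b ≠ s` keeps the last two coordinates apart while the first one is moved
    obtain ⟨s, hs, hbs⟩ : ∃ s : ℤ, (0, 0, s) ∈ generators ∧ b ≠ s := by
      rcases eq_or_ne b 1 with rfl | hb
      · exact ⟨-1, by simp [generators], by omega⟩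
      · exact ⟨1, by simp [generators], hb⟩
    exact move₃ c (move₁ a (move₂ b (gen hs) (by simp [generators] at hs; omega)) hbs) hab
  obtain ⟨a, b, c⟩ := t
  rcases eq_or_ne a b with rfl | hab
  · have hac : a ≠ c := by rintro rfl; exact ht ⟨a, rfl⟩
    exact move₁ a (of_ne (a := a + 1) (by omega)) hac
  · exact of_ne hab

theorem lqSub_toSubmodule_eq_span_compl_diagonal (hq : q ≠ 0) (hqo : ¬IsOfFinOrder q)
    (hz : Relations q z1 z2 z3) (b : Module.Basis (ℤ × ℤ × ℤ) F A)
    (hb : ∀ t, b t = monomial z1 z2 z3 t) :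
    (LqSub F z1 z2 z3).toSubmodule = Submodule.span F (monomial z1 z2 z3 '' diagonalᶜ) :=
  le_antisymm (lqSub_le_span_compl_diagonal hq hz b hb) <| Submodule.span_le.2 <| by
    rintro _ ⟨t, ht, rfl⟩
    exact monomial_mem_lqSub hq hqo hz ht

end QuantumTorus

/-- `A_q` is the internal direct sum of `L_q` and the `F`-linear span of
`{z₃^h z₂^h z₁^h : h ∈ ℤ}`: the two subspaces intersect trivially and their sum is all
of `A_q`. -/
theorem Aq_direct_sum_decomposition
    {F : Type*} [Field F] {A : Type*} [Ring A] [Algebra F A]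
    (q : F) (hq : q ≠ 0) (hqru : ∀ n : ℕ, 0 < n → q ^ n ≠ 1)
    (z1 z2 z3 : Aˣ)
    (h12 : (↑z1 * ↑z2 : A) = q • (↑z2 * ↑z1 : A))
    (h23 : (↑z2 * ↑z3 : A) = q • (↑z3 * ↑z2 : A))
    (h31 : (↑z3 * ↑z1 : A) = q • (↑z1 * ↑z3 : A))
    (b : Module.Basis (ℤ × ℤ × ℤ) F A)
    (hb : ∀ t : ℤ × ℤ × ℤ, b t = (↑(z3 ^ t.1 * z2 ^ t.2.1 * z1 ^ t.2.2) : A)) :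
    (LqSub F z1 z2 z3).toSubmodule ⊓
        Submodule.span F {x : A | ∃ h : ℤ, x = (↑(z3 ^ h * z2 ^ h * z1 ^ h) : A)} = ⊥ ∧
    (LqSub F z1 z2 z3).toSubmodule ⊔
        Submodule.span F {x : A | ∃ h : ℤ, x = (↑(z3 ^ h * z2 ^ h * z1 ^ h) : A)} = ⊤ := by
  have hqo : ¬IsOfFinOrder q := by simpa [isOfFinOrder_iff_pow_eq_one] using hqru
  have hL := QuantumTorus.lqSub_toSubmodule_eq_span_compl_diagonal hq hqo ⟨h12, h23, h31⟩ b hb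
  have hD : {x : A | ∃ h : ℤ, x = (↑(z3 ^ h * z2 ^ h * z1 ^ h) : A)} =
      QuantumTorus.monomial z1 z2 z3 '' QuantumTorus.diagonal := by
    ext
    simp [QuantumTorus.diagonal, QuantumTorus.monomial, eq_comm]
  have hcompl := b.linearIndependent.isCompl_span_image b.span_eq
    (isCompl_compl (x := QuantumTorus.diagonal)).symm
  rw [show ⇑b = QuantumTorus.monomial z1 z2 z3 from funext hb] at hcompl
  rw [hL, hD]
  exact ⟨hcompl.inf_eq_bot, hcompl.sup_eq_top⟩
end
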